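/- Let Γ be a discrete subgroup of SL(2,ℝ). Given a positive integer m, an integer ξ with ξ > 2m, a nonnegative integer δ, and a quasimodular polynomial F(z,X) ∈ QP^m_ξ(Γ), there exists a Jacobi-like form Φ(z,X) ∈ J_{ξ−2m−2δ}(Γ)_δ such that Π^δ_m Φ = F. -/

import Mathlib

noncomputable section

open Complex Polynomial

/-- The upper half plane `ℍ`, as a subset of `ℂ`. -/
def UHP : Set ℂ := {z : ℂ | 0 < z.im}

/-- `SL(2, ℝ)`. -/
abbrev SL2R := Matrix.SpecialLinearGroup (Fin 2) ℝ

/-- `GL⁺(2, ℝ)`, the group of real 2×2 matrices of positive determinant. -/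
abbrev GL2P := Matrix.GLPos (Fin 2) ℝ

/-- Topology on `SL(2,ℝ)` induced from the space of matrices (used to speak of
discrete subgroups of `SL(2,ℝ)`). -/
instance : TopologicalSpace SL2R :=
  TopologicalSpace.induced (fun g : SL2R => (g : Matrix (Fin 2) (Fin 2) ℝ)) inferInstance

/-- A function belongs to `𝓕` if it is holomorphic on the upper half plane. -/
def Hol (f : ℂ → ℂ) : Prop := DifferentiableOn ℂ f UHP

/-- `𝔍(γ, z) = cz + d` for `γ ∈ SL(2, ℝ)`. -/
def jJ (γ : SL2R) (z : ℂ) : ℂ := (γ 1 0 : ℝ) * z + (γ 1 1 : ℝ)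

/-- `𝔎(γ, z) = c/(cz + d)` for `γ ∈ SL(2, ℝ)`. -/
def kK (γ : SL2R) (z : ℂ) : ℂ := (γ 1 0 : ℝ) / jJ γ z

/-- `γ z = (az+b)/(cz+d)` for `γ ∈ SL(2, ℝ)`. -/
def mact (γ : SL2R) (z : ℂ) : ℂ := ((γ 0 0 : ℝ) * z + (γ 0 1 : ℝ)) / jJ γ z

/-- The underlying real matrix of an element of `GL⁺(2, ℝ)`. -/
def gmat (α : GL2P) : Matrix (Fin 2) (Fin 2) ℝ :=
  ((α : Matrix.GeneralLinearGroup (Fin 2) ℝ) : Matrix (Fin 2) (Fin 2) ℝ)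

/-- The determinant of an element of `GL⁺(2, ℝ)`. -/
def gdet (α : GL2P) : ℝ := (gmat α).det

/-- `𝔍(α, z) = cz + d` for `α ∈ GL⁺(2, ℝ)`. -/
def gJ (α : GL2P) (z : ℂ) : ℂ := (gmat α 1 0 : ℝ) * z + (gmat α 1 1 : ℝ)

/-- `𝔎(α, z) = c/(cz + d)` for `α ∈ GL⁺(2, ℝ)`. -/
def gK (α : GL2P) (z : ℂ) : ℂ := (gmat α 1 0 : ℝ) / gJ α z

/-- `α z = (az+b)/(cz+d)` for `α ∈ GL⁺(2, ℝ)`. -/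
def gact (α : GL2P) (z : ℂ) : ℂ := ((gmat α 0 0 : ℝ) * z + (gmat α 0 1 : ℝ)) / gJ α z

/-- `(det α)^(μ/2)` for `α ∈ GL⁺(2, ℝ)` and `μ ∈ ℤ`. -/
def detpow (α : GL2P) (μ : ℤ) : ℂ := ((gdet α ^ ((μ : ℝ) / 2) : ℝ) : ℂ)

/-- The weight-`ξ` action `F ∥_ξ γ` of `SL(2,ℝ)` on polynomials over `𝓕`:
`(F ∥_ξ γ)(z, X) = 𝔍(γ,z)^(-ξ) F(γz, 𝔍(γ,z)^2 (X - 𝔎(γ,z)))`. -/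
def polyAct (ξ : ℤ) (F : ℂ → Polynomial ℂ) (γ : SL2R) : ℂ → Polynomial ℂ := fun z =>
  Polynomial.C (jJ γ z ^ (-ξ)) *
    (F (mact γ z)).comp (Polynomial.C (jJ γ z ^ 2) * (Polynomial.X - Polynomial.C (kK γ z)))

/-- The weight-`ξ` action `F ∥_ξ α` of `GL⁺(2,ℝ)` on polynomials over `𝓕`:
`(F ∥_ξ α)(z, X) = (det α)^(ξ/2) 𝔍(α,z)^(-ξ) F(αz, (det α)⁻¹ 𝔍(α,z)^2 (X - 𝔎(α,z)))`. -/
def polyActG (ξ : ℤ) (F : ℂ → Polynomial ℂ) (α : GL2P) : ℂ → Polynomial ℂ := fun z =>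
  Polynomial.C (detpow α ξ * gJ α z ^ (-ξ)) *
    (F (gact α z)).comp
      (Polynomial.C ((gdet α : ℂ)⁻¹ * gJ α z ^ 2) * (Polynomial.X - Polynomial.C (gK α z)))

/-- The weight-`l` action `Φ |^J_l γ` of `SL(2,ℝ)` on formal power series over `𝓕`:
`(Φ |^J_l γ)(z, X) = 𝔍(γ,z)^(-l) e^(-𝔎(γ,z) X) Φ(γz, 𝔍(γ,z)^(-2) X)`. -/
def psAct (l : ℤ) (Φ : ℂ → PowerSeries ℂ) (γ : SL2R) : ℂ → PowerSeries ℂ := fun z =>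
  PowerSeries.C (jJ γ z ^ (-l)) *
    (PowerSeries.mk fun n => (-(kK γ z)) ^ n / (n.factorial : ℂ)) *
    PowerSeries.rescale (jJ γ z ^ (-2 : ℤ)) (Φ (mact γ z))

/-- The weight-`l` action `Φ |^J_l α` of `GL⁺(2,ℝ)` on formal power series over `𝓕`:
`(Φ |^J_l α)(z, X) = (det α)^(l/2) 𝔍(α,z)^(-l) e^(-𝔎(α,z) X) Φ(αz, (det α) 𝔍(α,z)^(-2) X)`. -/
def psActG (l : ℤ) (Φ : ℂ → PowerSeries ℂ) (α : GL2P) : ℂ → PowerSeries ℂ := fun z =>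
  PowerSeries.C (detpow α l * gJ α z ^ (-l)) *
    (PowerSeries.mk fun n => (-(gK α z)) ^ n / (n.factorial : ℂ)) *
    PowerSeries.rescale ((gdet α : ℂ) * gJ α z ^ (-2 : ℤ)) (Φ (gact α z))

/-- The map `Π^δ_m`: for `Φ(z,X) = Σ_k φ_k(z) X^(k+δ)`,
`(Π^δ_m Φ)(z, X) = Σ_{r=0}^m (1/r!) φ_(m-r)(z) X^r`. -/
def PiDM (δ m : ℕ) (Φ : ℂ → PowerSeries ℂ) : ℂ → Polynomial ℂ := fun z =>
  ∑ r ∈ Finset.range (m + 1),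
    Polynomial.C ((PowerSeries.coeff (m - r + δ) (Φ z)) / (r.factorial : ℂ)) *
      Polynomial.X ^ r

/-- Membership in `𝓕_m[X]`: degree at most `m` and holomorphic coefficients. -/
def InFmX (m : ℕ) (F : ℂ → Polynomial ℂ) : Prop :=
  (∀ z : ℂ, (F z).degree ≤ (m : WithBot ℕ)) ∧ ∀ r : ℕ, Hol fun z => (F z).coeff r

/-- Membership in `𝓕[[X]]_δ = X^δ 𝓕[[X]]` with holomorphic coefficients. -/
def InFXd (δ : ℕ) (Φ : ℂ → PowerSeries ℂ) : Prop :=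
  (∀ z : ℂ, ∀ k < δ, PowerSeries.coeff k (Φ z) = 0) ∧
    ∀ k : ℕ, Hol fun z => PowerSeries.coeff k (Φ z)

/-- `QP^m_ξ(Γ)`: quasimodular polynomials of weight `ξ` and degree at most `m` for `Γ`. -/
def IsQP (Γ : Subgroup SL2R) (ξ : ℤ) (m : ℕ) (F : ℂ → Polynomial ℂ) : Prop :=
  InFmX m F ∧ ∀ γ ∈ Γ, ∀ z ∈ UHP, polyAct ξ F γ z = F z

/-- `J_l(Γ)_δ`: Jacobi-like forms of weight `l` for `Γ` lying in `𝓕[[X]]_δ`. -/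
def IsJF (Γ : Subgroup SL2R) (l : ℤ) (δ : ℕ) (Φ : ℂ → PowerSeries ℂ) : Prop :=
  InFXd δ Φ ∧ ∀ γ ∈ Γ, ∀ z ∈ UHP, psAct l Φ γ z = Φ z

/-- `M_μ(Γ)`: modular forms of weight `μ` for `Γ` (cusp conditions suppressed). -/
def IsModular (Γ : Subgroup SL2R) (μ : ℤ) (f : ℂ → ℂ) : Prop :=
  Hol f ∧ ∀ γ ∈ Γ, ∀ z ∈ UHP, jJ γ z ^ (-μ) * f (mact γ z) = f z

/-- `QM^m_ξ(Γ)`: quasimodular forms of weight `ξ` and depth at most `m` for `Γ`. -/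
def IsQM (Γ : Subgroup SL2R) (ξ : ℤ) (m : ℕ) (f : ℂ → ℂ) : Prop :=
  Hol f ∧ ∃ g : ℕ → ℂ → ℂ, (∀ r, Hol (g r)) ∧
    ∀ γ ∈ Γ, ∀ z ∈ UHP,
      jJ γ z ^ (-ξ) * f (mact γ z) = ∑ r ∈ Finset.range (m + 1), g r z * kK γ z ^ r

/-- The factorial `t!` of an integer `t` (equal to `(t.toNat)!`; intended for `t ≥ 0`). -/
def zfact (t : ℤ) : ℂ := (t.toNat.factorial : ℂ)

/-!
Write `F = ∑ f_r X^r` and `φ_k = (m-k)! f_{m-k}`. Quasimodularity of `F` says exactly that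
`φ_0, …, φ_m` obey the transformation law of the first `m + 1` coefficients of a Jacobi-like
form of weight `n = ξ - 2m`. For a modular form `h` of weight `κ ≥ 1` the Cohen–Kuznetsov series
`CK_κ(h) = ∑ₜ (κ-1)! h⁽ᵗ⁾ Xᵗ / (t! (κ+t-1)!)` is Jacobi-like of weight `κ`, by the expansion of
`h⁽ᵗ⁾(z)` in the `h⁽ˢ⁾(γz)` obtained by differentiating `h(z) = 𝔍^{-κ} h(γz)` repeatedly.

Peel off `φ` recursively: `h_k = φ_k - ∑_{j<k} [X^k] X^j CK_{n+2j}(h_j)`. If `h_j` is modular of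
weight `n + 2j` for all `j < k`, the sequence `φ - ∑_{j<k} X^j CK_{n+2j}(h_j)` obeys the weight-`n`
law up to degree `k`, vanishes below degree `k` and equals `h_k` in degree `k`; the law in degree
`k` then says that `h_k` is modular of weight `n + 2k`. Hence `Ψ = ∑_{j ≤ m} X^j CK_{n+2j}(h_j)`
is Jacobi-like of weight `n` with first coefficients `φ_k`, and `Φ = X^δ Ψ` does the job.
-/

open Finset

lemma isOpen_UHP : IsOpen UHP := isOpen_lt continuous_const Complex.continuous_im

lemma Hol.iterate_deriv {g : ℂ → ℂ} (hg : Hol g) (t : ℕ) : Hol (deriv^[t] g) :=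
  ((hg.analyticOnNhd isOpen_UHP).iterated_deriv t).differentiableOn

lemma SL2R.det_eq_one (γ : SL2R) : (γ 0 0 : ℝ) * γ 1 1 - γ 0 1 * γ 1 0 = 1 := by
  have h := γ.2
  rw [Matrix.det_fin_two] at h
  simpa using h

lemma jJ_ne_zero (γ : SL2R) {z : ℂ} (hz : z ∈ UHP) : jJ γ z ≠ 0 := by
  intro h
  have hc : (γ 1 0 : ℝ) = 0 := by
    have him : (γ 1 0 : ℝ) * z.im = 0 := by simpa [jJ] using congrArg Complex.im h
    exact (mul_eq_zero.mp him).resolve_right hz.ne'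
  have hd : (γ 1 1 : ℝ) = 0 := by simpa [jJ, hc] using congrArg Complex.re h
  simpa [hc, hd] using γ.det_eq_one

lemma im_mact (γ : SL2R) (z : ℂ) : (mact γ z).im = z.im / Complex.normSq (jJ γ z) := by
  rw [mact, Complex.div_im, div_sub_div_same]
  congr 1
  simp only [jJ, Complex.add_im, Complex.add_re, Complex.mul_im, Complex.mul_re,
    Complex.ofReal_re, Complex.ofReal_im]
  linear_combination z.im * γ.det_eq_one

lemma mact_mem_UHP (γ : SL2R) {z : ℂ} (hz : z ∈ UHP) : mact γ z ∈ UHP := by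
  show 0 < (mact γ z).im
  rw [im_mact]
  exact div_pos hz (Complex.normSq_pos.mpr (jJ_ne_zero γ hz))

lemma hasDerivAt_jJ (γ : SL2R) (z : ℂ) : HasDerivAt (jJ γ) (γ 1 0 : ℝ) z := by
  have h := ((hasDerivAt_id z).const_mul ((γ 1 0 : ℝ) : ℂ)).add_const ((γ 1 1 : ℝ) : ℂ)
  simp only [id, mul_one] at h
  exact h

lemma hasDerivAt_mact (γ : SL2R) {z : ℂ} (hJ : jJ γ z ≠ 0) :
    HasDerivAt (mact γ) (jJ γ z ^ (-2 : ℤ)) z := by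
  have hnum : HasDerivAt (fun w => ((γ 0 0 : ℝ) : ℂ) * w + (γ 0 1 : ℝ)) (γ 0 0 : ℝ) z := by
    simpa using ((hasDerivAt_id z).const_mul ((γ 0 0 : ℝ) : ℂ)).add_const ((γ 0 1 : ℝ) : ℂ)
  refine (hnum.div (hasDerivAt_jJ γ z) hJ).congr_deriv ?_
  have hdet : ((γ 0 0 : ℝ) : ℂ) * (γ 1 1 : ℝ) - (γ 0 1 : ℝ) * (γ 1 0 : ℝ) = 1 := by
    exact_mod_cast γ.det_eq_one
  have hcross : ((γ 0 0 : ℝ) : ℂ) * jJ γ z - (((γ 0 0 : ℝ) : ℂ) * z + (γ 0 1 : ℝ)) * (γ 1 0 : ℝ)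
      = 1 := by
    simp only [jJ]
    linear_combination hdet
  rw [hcross, one_div, zpow_neg, zpow_two, sq]

lemma hasDerivAt_kK (γ : SL2R) {z : ℂ} (hJ : jJ γ z ≠ 0) :
    HasDerivAt (kK γ) (-kK γ z ^ 2) z := by
  refine ((hasDerivAt_const z ((γ 1 0 : ℝ) : ℂ)).div (hasDerivAt_jJ γ z) hJ).congr_deriv ?_
  rw [kK]
  field_simp
  ring

lemma hasDerivAt_jJ_zpow (γ : SL2R) {z : ℂ} (hJ : jJ γ z ≠ 0) (e : ℤ) :
    HasDerivAt (fun w => jJ γ w ^ e) (e * kK γ z * jJ γ z ^ e) z := by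
  refine ((hasDerivAt_zpow e _ (Or.inl hJ)).comp z (hasDerivAt_jJ γ z)).congr_deriv ?_
  rw [kK, zpow_sub_one₀ hJ]
  field_simp

/-- Coefficient `k` of `Ψ |^J_n γ` at `z`, for `Ψ = ∑ ψ_k X^k` (see `coeff_psAct_mk`). -/
def jacobiTransform (n : ℤ) (γ : SL2R) (ψ : ℕ → ℂ → ℂ) (k : ℕ) (z : ℂ) : ℂ :=
  ∑ i ∈ range (k + 1),
    (-kK γ z) ^ (k - i) / ((k - i).factorial : ℂ) * jJ γ z ^ (-(n + 2 * i)) * ψ i (mact γ z)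

section JacobiTransform

variable {n : ℤ} {γ : SL2R}

lemma jacobiTransform_sub (ψ χ : ℕ → ℂ → ℂ) (k : ℕ) (z : ℂ) :
    jacobiTransform n γ (fun i w => ψ i w - χ i w) k z
      = jacobiTransform n γ ψ k z - jacobiTransform n γ χ k z := by
  simp only [jacobiTransform, ← sum_sub_distrib, mul_sub]

lemma jacobiTransform_sum {ι : Type*} (s : Finset ι) (ψ : ι → ℕ → ℂ → ℂ) (k : ℕ) (z : ℂ) :
    jacobiTransform n γ (fun i w => ∑ j ∈ s, ψ j i w) k z
      = ∑ j ∈ s, jacobiTransform n γ (ψ j) k z := by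
  simp only [jacobiTransform, mul_sum]
  exact sum_comm

lemma jacobiTransform_of_eq_zero_of_lt {ψ : ℕ → ℂ → ℂ} {k : ℕ} {z : ℂ}
    (hψ : ∀ i < k, ψ i (mact γ z) = 0) :
    jacobiTransform n γ ψ k z = jJ γ z ^ (-(n + 2 * k)) * ψ k (mact γ z) := by
  rw [jacobiTransform, sum_range_succ, sum_eq_zero fun i hi => by rw [hψ i (mem_range.mp hi)]; ring]
  simp

/-- Multiplication by `X ^ j` on coefficient sequences. -/
def shiftSeq (j : ℕ) (ψ : ℕ → ℂ → ℂ) : ℕ → ℂ → ℂ := fun k z => if j ≤ k then ψ (k - j) z else 0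

lemma Hol.shiftSeq {ψ : ℕ → ℂ → ℂ} (hψ : ∀ k, Hol (ψ k)) (j k : ℕ) : Hol (shiftSeq j ψ k) := by
  unfold _root_.shiftSeq
  split_ifs
  exacts [hψ _, differentiableOn_const 0]

lemma jacobiTransform_shiftSeq (j : ℕ) (ψ : ℕ → ℂ → ℂ) (k : ℕ) (z : ℂ) :
    jacobiTransform n γ (shiftSeq j ψ) k z = shiftSeq j (jacobiTransform (n + 2 * j) γ ψ) k z := by
  unfold jacobiTransform shiftSeq
  split_ifs with hjk
  · obtain ⟨t, rfl⟩ := Nat.exists_eq_add_of_le hjk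
    rw [show j + t + 1 = j + (t + 1) by ring, sum_range_add, sum_eq_zero fun i hi => by
      rw [if_neg (by simp at hi; omega)]; ring, zero_add, Nat.add_sub_cancel_left]
    refine sum_congr rfl fun s hs => ?_
    rw [if_pos (by omega), Nat.add_sub_cancel_left, show j + t - (j + s) = t - s by omega]
    push_cast
    ring_nf
  · exact sum_eq_zero fun i hi => by rw [if_neg (by simp at hi; omega)]; ring

lemma coeff_psAct_mk (ψ : ℕ → ℂ → ℂ) (k : ℕ) {z : ℂ} (hz : z ∈ UHP) :
    PowerSeries.coeff k (psAct n (fun w => PowerSeries.mk fun i => ψ i w) γ z)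
      = jacobiTransform n γ ψ k z := by
  have hJ := jJ_ne_zero γ hz
  rw [psAct, mul_assoc, PowerSeries.coeff_C_mul, PowerSeries.coeff_mul,
    ← Nat.sum_antidiagonal_swap, Nat.sum_antidiagonal_eq_sum_range_succ_mk, mul_sum]
  refine sum_congr rfl fun i hi => ?_
  simp only [Prod.fst_swap, Prod.snd_swap, PowerSeries.coeff_mk, PowerSeries.coeff_rescale]
  rw [← zpow_natCast (jJ γ z ^ (-2 : ℤ)) i, ← zpow_mul,
    show -(n + 2 * i) = -n + (-2) * (i : ℤ) by ring, zpow_add₀ hJ]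
  ring

end JacobiTransform

/-- `φ_k = (m-k)! f_{m-k}` for `F = ∑ f_r X^r`: the coefficients that `Π^δ_m` must reproduce. -/
def qpCoeffSeq (m : ℕ) (F : ℂ → ℂ[X]) : ℕ → ℂ → ℂ :=
  fun k z => ((m - k).factorial : ℂ) * (F z).coeff (m - k)

section QuasimodularPolynomial

variable {ξ : ℤ} {m : ℕ} {F : ℂ → ℂ[X]} {γ : SL2R}

lemma coeff_polyAct {z : ℂ} (hdeg : (F (mact γ z)).natDegree ≤ m) (r : ℕ) :
    (polyAct ξ F γ z).coeff r = jJ γ z ^ (-ξ) * ∑ s ∈ range (m + 1),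
      (F (mact γ z)).coeff s * ((s.choose r : ℂ) * (jJ γ z ^ 2) ^ s * (-kK γ z) ^ (s - r)) := by
  rw [polyAct, coeff_C_mul]
  congr 1
  conv_lhs => rw [as_sum_range' (F (mact γ z)) (m + 1) (Nat.lt_succ_of_le hdeg)]
  rw [Polynomial.sum_comp, finsetSum_coeff]
  refine sum_congr rfl fun s _ => ?_
  rw [monomial_comp, sub_eq_add_neg, ← C_neg, mul_pow, ← C_pow, coeff_C_mul, coeff_C_mul,
    coeff_X_add_C_pow]
  ring

lemma jacobiTransform_qpCoeffSeq {n : ℤ} (hn : n = ξ - 2 * m)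
    (hdeg : ∀ z, (F z).degree ≤ m) {z : ℂ} (hz : z ∈ UHP) (hF : polyAct ξ F γ z = F z)
    {k : ℕ} (hkm : k ≤ m) :
    jacobiTransform n γ (qpCoeffSeq m F) k z = qpCoeffSeq m F k z := by
  have hJ := jJ_ne_zero γ hz
  have hcoeff := coeff_polyAct (ξ := ξ) (natDegree_le_iff_degree_le.mpr (hdeg (mact γ z))) (m - k)
  rw [hF, ← sum_range_reflect] at hcoeff
  rw [qpCoeffSeq, hcoeff, ← sum_subset (range_subset_range.mpr (by omega : k + 1 ≤ m + 1))
    fun i him hik => by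
      rw [Nat.choose_eq_zero_of_lt (by simp at him hik; omega : m + 1 - 1 - i < m - k)]; simp,
    mul_sum, mul_sum, jacobiTransform]
  refine sum_congr rfl fun i hi => ?_
  have hik : i ≤ k := by simp at hi; omega
  have hchoose : ((m - i).choose (m - k) : ℂ) * ((m - k).factorial : ℂ) * ((k - i).factorial : ℂ)
      = ((m - i).factorial : ℂ) := by
    have h := Nat.choose_mul_factorial_mul_factorial (show m - k ≤ m - i by omega)
    rw [show m - i - (m - k) = k - i by omega] at h
    exact_mod_cast h
  have hpow : jJ γ z ^ (-ξ) * (jJ γ z ^ 2) ^ (m - i) = jJ γ z ^ (-(n + 2 * i)) := by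
    rw [← pow_mul, ← zpow_natCast, ← zpow_add₀ hJ]
    congr 1
    push_cast [show i ≤ m by omega]
    omega
  rw [show m + 1 - 1 - i = m - i by omega, show m - i - (m - k) = k - i by omega, qpCoeffSeq,
    ← hpow, ← hchoose]
  field_simp [Nat.factorial_ne_zero]

end QuasimodularPolynomial

section DerivativeExpansion

def derivCoeffNat (κ t s : ℕ) : ℕ := t.choose s * (κ + t - 1).descFactorial (t - s)

def derivCoeff (κ t s : ℕ) : ℂ := (-1) ^ (t - s) * derivCoeffNat κ t s

variable {κ : ℕ}

lemma derivCoeffNat_self (κ t : ℕ) : derivCoeffNat κ t t = 1 := by simp [derivCoeffNat]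

lemma derivCoeffNat_of_lt {t s : ℕ} (h : t < s) : derivCoeffNat κ t s = 0 := by
  simp [derivCoeffNat, Nat.choose_eq_zero_of_lt h]

lemma derivCoeffNat_succ_succ (hκ : 1 ≤ κ) {t s : ℕ} (hst : s ≤ t) :
    derivCoeffNat κ (t + 1) (s + 1)
      = derivCoeffNat κ t s + (κ + t + s + 1) * derivCoeffNat κ t (s + 1) := by
  obtain ⟨κ, rfl⟩ := Nat.exists_eq_add_of_le' hκ
  rcases hst.eq_or_lt with rfl | hlt
  · simp [derivCoeffNat]
  obtain ⟨a, rfl⟩ := Nat.exists_eq_add_of_lt hlt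
  rw [derivCoeffNat, derivCoeffNat, derivCoeffNat,
    show κ + 1 + (s + a + 1 + 1) - 1 = κ + s + a + 1 + 1 by omega,
    show κ + 1 + (s + a + 1) - 1 = κ + s + a + 1 by omega,
    show s + a + 1 + 1 - (s + 1) = a + 1 by omega, show s + a + 1 - s = a + 1 by omega,
    show s + a + 1 - (s + 1) = a by omega, Nat.succ_descFactorial_succ, Nat.descFactorial_succ,
    Nat.choose_succ_succ' (s + a + 1) s, show κ + s + a + 1 - a = κ + s + 1 by omega]
  have hpascal := Nat.choose_succ_right_eq (s + a + 1) s
  rw [show s + a + 1 - s = a + 1 by omega] at hpascal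
  zify at hpascal ⊢
  linear_combination (-((κ + s + a + 1).descFactorial a : ℤ)) * hpascal

lemma derivCoeffNat_succ_zero (hκ : 1 ≤ κ) (t : ℕ) :
    derivCoeffNat κ (t + 1) 0 = (κ + t) * derivCoeffNat κ t 0 := by
  obtain ⟨κ, rfl⟩ := Nat.exists_eq_add_of_le' hκ
  simp only [derivCoeffNat, Nat.choose_zero_right, Nat.sub_zero, one_mul,
    show κ + 1 + (t + 1) - 1 = κ + t + 1 by omega, show κ + 1 + t - 1 = κ + t by omega,
    Nat.succ_descFactorial_succ]
  ring

lemma derivCoeffNat_mul_factorial (hκ : 1 ≤ κ) {t s : ℕ} (hst : s ≤ t) :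
    derivCoeffNat κ t s * (s.factorial * (t - s).factorial * (κ + s - 1).factorial)
      = t.factorial * (κ + t - 1).factorial := by
  obtain ⟨κ, rfl⟩ := Nat.exists_eq_add_of_le' hκ
  have hdesc : (κ + t).descFactorial (t - s) * (κ + s).factorial = (κ + t).factorial := by
    rw [← Nat.factorial_mul_descFactorial (show t - s ≤ κ + t by omega),
      show κ + t - (t - s) = κ + s by omega, mul_comm]
  rw [derivCoeffNat, show κ + 1 + t - 1 = κ + t by omega, show κ + 1 + s - 1 = κ + s by omega,
    ← Nat.choose_mul_factorial_mul_factorial hst, ← hdesc]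
  ring

lemma derivCoeff_self (κ t : ℕ) : derivCoeff κ t t = 1 := by
  simp [derivCoeff, derivCoeffNat_self]

lemma derivCoeff_of_lt {t s : ℕ} (h : t < s) : derivCoeff κ t s = 0 := by
  simp [derivCoeff, derivCoeffNat_of_lt h]

lemma derivCoeff_succ_succ (hκ : 1 ≤ κ) {t s : ℕ} (hst : s ≤ t) :
    derivCoeff κ (t + 1) (s + 1)
      = derivCoeff κ t s - ((κ : ℂ) + t + s + 1) * derivCoeff κ t (s + 1) := by
  rcases hst.eq_or_lt with rfl | hlt
  · simp [derivCoeff, derivCoeffNat_self, derivCoeffNat_of_lt (Nat.lt_succ_self s)]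
  obtain ⟨a, rfl⟩ := Nat.exists_eq_add_of_lt hlt
  rw [derivCoeff, derivCoeff, derivCoeff, derivCoeffNat_succ_succ hκ hst,
    show s + a + 1 + 1 - (s + 1) = a + 1 by omega, show s + a + 1 - s = a + 1 by omega,
    show s + a + 1 - (s + 1) = a by omega]
  push_cast
  ring

lemma derivCoeff_succ_zero (hκ : 1 ≤ κ) (t : ℕ) :
    derivCoeff κ (t + 1) 0 = -((κ : ℂ) + t) * derivCoeff κ t 0 := by
  simp only [derivCoeff, derivCoeffNat_succ_zero hκ, Nat.sub_zero]
  push_cast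
  ring

lemma sum_derivCoeff_succ (hκ : 1 ≤ κ) (t : ℕ) (u : ℕ → ℂ) :
    ∑ s ∈ range (t + 1), derivCoeff κ t s * (u (s + 1) - ((κ : ℂ) + t + s) * u s)
      = ∑ s ∈ range (t + 2), derivCoeff κ (t + 1) s * u s := by
  have hshift : ∑ s ∈ range (t + 1), derivCoeff κ (t + 1) (s + 1) * u (s + 1)
      = ∑ s ∈ range (t + 1), derivCoeff κ t s * u (s + 1)
        - ∑ s ∈ range (t + 1), ((κ : ℂ) + t + s + 1) * derivCoeff κ t (s + 1) * u (s + 1) := by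
    rw [← sum_sub_distrib]
    refine sum_congr rfl fun s hs => ?_
    rw [derivCoeff_succ_succ hκ (Nat.lt_succ_iff.mp (mem_range.mp hs))]
    ring
  have hreindex : ∑ s ∈ range (t + 1), ((κ : ℂ) + t + s) * derivCoeff κ t s * u s
      = ∑ s ∈ range (t + 1), ((κ : ℂ) + t + s + 1) * derivCoeff κ t (s + 1) * u (s + 1)
        + ((κ : ℂ) + t) * derivCoeff κ t 0 * u 0 := by
    rw [sum_range_succ', sum_range_succ _ t, derivCoeff_of_lt (Nat.lt_succ_self t)]
    push_cast
    ring_nf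
  rw [sum_range_succ' _ (t + 1), hshift, derivCoeff_succ_zero hκ]
  simp only [mul_sub, sum_sub_distrib, ← mul_assoc, mul_comm (derivCoeff κ t _) (_ + _), hreindex]
  ring

variable {γ : SL2R} {h : ℂ → ℂ}

def modTerm (γ : SL2R) (κ : ℕ) (h : ℂ → ℂ) (p s : ℕ) (w : ℂ) : ℂ :=
  kK γ w ^ p * (jJ γ w ^ (-((κ : ℤ) + 2 * s)) * deriv^[s] h (mact γ w))

lemma hasDerivAt_modTerm (hh : Hol h) (p s : ℕ) {z : ℂ} (hz : z ∈ UHP) :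
    HasDerivAt (modTerm γ κ h p s)
      (modTerm γ κ h p (s + 1) z - ((κ : ℂ) + p + 2 * s) * modTerm γ κ h (p + 1) s z) z := by
  have hJ := jJ_ne_zero γ hz
  have hK : HasDerivAt (fun w => kK γ w ^ p) (-p * kK γ z ^ (p + 1)) z := by
    refine ((hasDerivAt_kK γ hJ).fun_pow p).congr_deriv ?_
    cases p
    · simp
    · simp only [Nat.cast_add, Nat.cast_one, Nat.add_sub_cancel]
      ring
  have hH : HasDerivAt (fun w => deriv^[s] h (mact γ w))
      (deriv^[s + 1] h (mact γ z) * jJ γ z ^ (-2 : ℤ)) z := by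
    rw [Function.iterate_succ_apply']
    exact (((hh.iterate_deriv s).differentiableAt
      (isOpen_UHP.mem_nhds (mact_mem_UHP γ hz))).hasDerivAt).comp z (hasDerivAt_mact γ hJ)
  refine (hK.fun_mul ((hasDerivAt_jJ_zpow γ hJ _).fun_mul hH)).congr_deriv ?_
  have hsplit : jJ γ z ^ (-((κ : ℤ) + 2 * ((s + 1 : ℕ) : ℤ)))
      = jJ γ z ^ (-((κ : ℤ) + 2 * s)) * jJ γ z ^ (-2 : ℤ) := by
    rw [← zpow_add₀ hJ]
    push_cast
    ring_nf
  simp only [modTerm, hsplit]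
  push_cast
  ring

lemma iterate_deriv_eq_sum_derivCoeff (hκ : 1 ≤ κ) (hh : Hol h)
    (hmod : ∀ z ∈ UHP, jJ γ z ^ (-(κ : ℤ)) * h (mact γ z) = h z) (t : ℕ) :
    ∀ z ∈ UHP,
      deriv^[t] h z = ∑ s ∈ range (t + 1), derivCoeff κ t s * modTerm γ κ h (t - s) s z := by
  induction t with
  | zero =>
    intro z hz
    simpa [modTerm, derivCoeff_self] using (hmod z hz).symm
  | succ t ih =>
    intro z hz
    have hderiv : HasDerivAt
        (fun w => ∑ s ∈ range (t + 1), derivCoeff κ t s * modTerm γ κ h (t - s) s w)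
        (∑ s ∈ range (t + 1), derivCoeff κ t s * (modTerm γ κ h (t - s) (s + 1) z
          - ((κ : ℂ) + (t - s : ℕ) + 2 * s) * modTerm γ κ h (t - s + 1) s z)) z :=
      HasDerivAt.fun_sum fun s _ => (hasDerivAt_modTerm hh _ s hz).const_mul _
    rw [Function.iterate_succ_apply',
      (Filter.eventuallyEq_of_mem (isOpen_UHP.mem_nhds hz) ih).deriv_eq, hderiv.deriv,
      ← sum_derivCoeff_succ hκ t (fun s => modTerm γ κ h (t + 1 - s) s z)]
    refine sum_congr rfl fun s hs => ?_
    have hst : s ≤ t := Nat.lt_succ_iff.mp (mem_range.mp hs)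
    rw [show t + 1 - (s + 1) = t - s by omega, show t + 1 - s = t - s + 1 by omega]
    push_cast [hst]
    ring

end DerivativeExpansion

section CohenKuznetsov

variable {γ : SL2R} {κ : ℕ} {h : ℂ → ℂ}

def ckCoeff (κ t : ℕ) : ℂ :=
  ((κ - 1).factorial : ℂ) / ((t.factorial : ℂ) * ((κ + t - 1).factorial : ℂ))

/-- The coefficients of the Cohen–Kuznetsov lift `∑ₜ (κ-1)! h⁽ᵗ⁾ Xᵗ / (t! (κ+t-1)!)`. -/
def ckLift (κ : ℕ) (h : ℂ → ℂ) : ℕ → ℂ → ℂ := fun t z => ckCoeff κ t * deriv^[t] h z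

lemma ckLift_zero (κ : ℕ) (h : ℂ → ℂ) : ckLift κ h 0 = h := by
  ext z
  simp [ckLift, ckCoeff, Nat.factorial_ne_zero]

lemma Hol.ckLift (hh : Hol h) (t : ℕ) : Hol (_root_.ckLift κ h t) :=
  (hh.iterate_deriv t).const_mul _

lemma ckCoeff_mul_derivCoeff (hκ : 1 ≤ κ) {t s : ℕ} (hst : s ≤ t) :
    ckCoeff κ t * derivCoeff κ t s = (-1) ^ (t - s) / ((t - s).factorial : ℂ) * ckCoeff κ s := by
  have hfact : (derivCoeffNat κ t s : ℂ) * ((s.factorial : ℂ) * ((t - s).factorial : ℂ)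
      * ((κ + s - 1).factorial : ℂ)) = (t.factorial : ℂ) * ((κ + t - 1).factorial : ℂ) := by
    exact_mod_cast derivCoeffNat_mul_factorial hκ hst
  rw [ckCoeff, ckCoeff, derivCoeff]
  field_simp [Nat.factorial_ne_zero]
  linear_combination hfact

lemma jacobiTransform_ckLift (hκ : 1 ≤ κ) (hh : Hol h)
    (hmod : ∀ z ∈ UHP, jJ γ z ^ (-(κ : ℤ)) * h (mact γ z) = h z) (t : ℕ) {z : ℂ} (hz : z ∈ UHP) :
    jacobiTransform κ γ (ckLift κ h) t z = ckLift κ h t z := by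
  rw [ckLift, iterate_deriv_eq_sum_derivCoeff hκ hh hmod t z hz, mul_sum, jacobiTransform]
  refine sum_congr rfl fun s hs => ?_
  rw [← mul_assoc, ckCoeff_mul_derivCoeff hκ (Nat.lt_succ_iff.mp (mem_range.mp hs)), modTerm,
    ckLift, neg_pow]
  ring

end CohenKuznetsov

section Lift

variable (n : ℕ) (φ : ℕ → ℂ → ℂ)

/-- The forms `h_k` of weight `n + 2k` whose shifted Cohen–Kuznetsov lifts add up to `φ`. -/
def liftSeq : ℕ → ℂ → ℂ
  | k => fun z => φ k z - ∑ j : Fin k, ckLift (n + 2 * j) (liftSeq j) (k - j) z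

def liftTerm (j : ℕ) : ℕ → ℂ → ℂ := shiftSeq j (ckLift (n + 2 * j) (liftSeq n φ j))

def jacobiLift (m : ℕ) : ℕ → ℂ → ℂ := fun k z => ∑ j ∈ range (m + 1), liftTerm n φ j k z

variable {n φ}

lemma sum_range_liftTerm_self (k : ℕ) (z : ℂ) :
    ∑ j ∈ range k, liftTerm n φ j k z = φ k z - liftSeq n φ k z := by
  rw [liftSeq]
  dsimp only
  rw [Fin.sum_univ_eq_sum_range (fun j => ckLift (n + 2 * j) (liftSeq n φ j) (k - j) z),
    sub_sub_cancel]
  exact sum_congr rfl fun j hj => if_pos (mem_range.mp hj).le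

lemma sum_liftTerm_of_lt {i K : ℕ} (hiK : i < K) (z : ℂ) :
    ∑ j ∈ range K, liftTerm n φ j i z = φ i z := by
  have hvanish : ∀ j ∈ range K, j ∉ range (i + 1) → liftTerm n φ j i z = 0 := fun j _ hj =>
    if_neg (by simp at hj; omega)
  have htop : liftTerm n φ i i z = liftSeq n φ i z := by
    simp [liftTerm, shiftSeq, ckLift_zero]
  rw [← sum_subset (range_subset_range.mpr hiK) hvanish, sum_range_succ, sum_range_liftTerm_self,
    htop, sub_add_cancel]

lemma Hol.liftSeq (hφ : ∀ k, Hol (φ k)) (k : ℕ) : Hol (_root_.liftSeq n φ k) := by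
  induction k using Nat.strong_induction_on with
  | _ k ih =>
    rw [show _root_.liftSeq n φ k = fun z => φ k z - ∑ j ∈ range k, liftTerm n φ j k z by
      ext z; rw [sum_range_liftTerm_self, sub_sub_cancel]]
    exact (hφ k).sub (DifferentiableOn.fun_sum fun j hj =>
      Hol.shiftSeq (fun t => (ih j (mem_range.mp hj)).ckLift t) j k)

lemma Hol.jacobiLift (hφ : ∀ k, Hol (φ k)) (m k : ℕ) : Hol (_root_.jacobiLift n φ m k) :=
  DifferentiableOn.fun_sum fun j _ => Hol.shiftSeq (fun t => (Hol.liftSeq hφ j).ckLift t) j k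

variable {γ : SL2R}

lemma jacobiTransform_liftTerm (hn : 1 ≤ n) (hφ : ∀ k, Hol (φ k)) {j : ℕ}
    (hmod : ∀ z ∈ UHP, jJ γ z ^ (-((n + 2 * j : ℕ) : ℤ)) * liftSeq n φ j (mact γ z)
      = liftSeq n φ j z) (k : ℕ) {z : ℂ} (hz : z ∈ UHP) :
    jacobiTransform n γ (liftTerm n φ j) k z = liftTerm n φ j k z := by
  rw [liftTerm, jacobiTransform_shiftSeq]
  unfold shiftSeq
  split_ifs
  · exact_mod_cast jacobiTransform_ckLift (by omega) (Hol.liftSeq hφ j) hmod (k - j) hz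
  · rfl

lemma liftSeq_modular (hn : 1 ≤ n) (hφ : ∀ k, Hol (φ k)) {m : ℕ}
    (hφγ : ∀ z ∈ UHP, ∀ k ≤ m, jacobiTransform n γ φ k z = φ k z) {k : ℕ} (hkm : k ≤ m) :
    ∀ z ∈ UHP, jJ γ z ^ (-((n + 2 * k : ℕ) : ℤ)) * liftSeq n φ k (mact γ z) = liftSeq n φ k z := by
  induction k using Nat.strong_induction_on with
  | _ k ih =>
    intro z hz
    set r : ℕ → ℂ → ℂ := fun i w => φ i w - ∑ j ∈ range k, liftTerm n φ j i w
    have hr_top : ∀ w, r k w = liftSeq n φ k w := fun w => by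
      simp only [r, sum_range_liftTerm_self, sub_sub_cancel]
    have hr_law : jacobiTransform n γ r k z = r k z := by
      rw [jacobiTransform_sub, jacobiTransform_sum, hφγ z hz k hkm]
      congr 1
      exact sum_congr rfl fun j hj =>
        jacobiTransform_liftTerm hn hφ (ih j (mem_range.mp hj) (by simp at hj; omega)) k hz
    have hr_low : ∀ i < k, r i (mact γ z) = 0 := fun i hi =>
      sub_eq_zero.mpr (sum_liftTerm_of_lt hi _).symm
    calc jJ γ z ^ (-((n + 2 * k : ℕ) : ℤ)) * liftSeq n φ k (mact γ z)
        = jacobiTransform n γ r k z := by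
          rw [jacobiTransform_of_eq_zero_of_lt hr_low, hr_top]
          push_cast
          rfl
      _ = liftSeq n φ k z := by rw [hr_law, hr_top]

lemma jacobiTransform_jacobiLift (hn : 1 ≤ n) (hφ : ∀ k, Hol (φ k)) {m : ℕ}
    (hφγ : ∀ z ∈ UHP, ∀ k ≤ m, jacobiTransform n γ φ k z = φ k z) (k : ℕ) {z : ℂ} (hz : z ∈ UHP) :
    jacobiTransform n γ (jacobiLift n φ m) k z = jacobiLift n φ m k z := by
  unfold jacobiLift
  rw [jacobiTransform_sum]
  exact sum_congr rfl fun j hj => jacobiTransform_liftTerm hn hφ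
    (liftSeq_modular hn hφ hφγ (Nat.lt_succ_iff.mp (mem_range.mp hj))) k hz

lemma jacobiLift_of_le {m k : ℕ} (hkm : k ≤ m) (z : ℂ) : jacobiLift n φ m k z = φ k z :=
  sum_liftTerm_of_lt (Nat.lt_succ_of_le hkm) z

end Lift

lemma PiDM_shiftSeq_of_eq_qpCoeffSeq {δ m : ℕ} {F : ℂ → ℂ[X]} {ψ : ℕ → ℂ → ℂ} {z : ℂ}
    (hψ : ∀ k ≤ m, ψ k z = qpCoeffSeq m F k z) (hdeg : (F z).degree ≤ m) :
    PiDM δ m (fun w => PowerSeries.mk fun N => shiftSeq δ ψ N w) z = F z := by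
  rw [PiDM, as_sum_range' (F z) (m + 1) (Nat.lt_succ_of_le (natDegree_le_iff_degree_le.mpr hdeg))]
  refine sum_congr rfl fun r hr => ?_
  have hrm : r ≤ m := Nat.lt_succ_iff.mp (mem_range.mp hr)
  rw [PowerSeries.coeff_mk, shiftSeq, if_pos (Nat.le_add_left δ _), Nat.add_sub_cancel,
    hψ _ (Nat.sub_le m r), qpCoeffSeq, Nat.sub_sub_self hrm, ← C_mul_X_pow_eq_monomial,
    mul_div_cancel_left₀ _ (Nat.cast_ne_zero.mpr (Nat.factorial_ne_zero r))]

theorem stmt15_general (Γ : Subgroup SL2R) (m : ℕ)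
    (ξ : ℤ) (hξ : 2 * (m : ℤ) < ξ) (δ : ℕ)
    (F : ℂ → Polynomial ℂ) (hF : IsQP Γ ξ m F) :
    ∃ Φ : ℂ → PowerSeries ℂ,
      IsJF Γ (ξ - 2 * (m : ℤ) - 2 * (δ : ℤ)) δ Φ ∧ ∀ z ∈ UHP, PiDM δ m Φ z = F z := by
  obtain ⟨⟨hdeg, hhol⟩, hinv⟩ := hF
  obtain ⟨n, hn⟩ : ∃ n : ℕ, (n : ℤ) = ξ - 2 * m :=
    ⟨(ξ - 2 * m).toNat, Int.toNat_of_nonneg (by omega)⟩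
  have hφ : ∀ k, Hol (qpCoeffSeq m F k) := fun k => (hhol (m - k)).const_mul _
  set ψ := jacobiLift n (qpCoeffSeq m F) m
  have hψ : ∀ γ ∈ Γ, ∀ z ∈ UHP, ∀ k, jacobiTransform n γ ψ k z = ψ k z :=
    fun γ hγ z hz k => jacobiTransform_jacobiLift (by omega) hφ
      (fun w hw k hk => jacobiTransform_qpCoeffSeq hn hdeg hw (hinv γ hγ w hw) hk) k hz
  refine ⟨fun z => PowerSeries.mk fun N => shiftSeq δ ψ N z,
    ⟨⟨fun z k hk => ?_, fun k => ?_⟩, fun γ hγ z hz => ?_⟩,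
    fun z _ => PiDM_shiftSeq_of_eq_qpCoeffSeq (fun k hk => jacobiLift_of_le hk z) (hdeg z)⟩
  · simp [shiftSeq, hk]
  · simpa using Hol.shiftSeq (Hol.jacobiLift hφ m) δ k
  · ext N
    rw [coeff_psAct_mk _ _ hz, jacobiTransform_shiftSeq,
      show ξ - 2 * m - 2 * δ + 2 * δ = (n : ℤ) by omega]
    simp only [shiftSeq, PowerSeries.coeff_mk, hψ γ hγ z hz]

theorem stmt15 (Γ : Subgroup SL2R) (hΓ : DiscreteTopology Γ) (m : ℕ) (hm : 0 < m)
    (ξ : ℤ) (hξ : 2 * (m : ℤ) < ξ) (δ : ℕ)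
    (F : ℂ → Polynomial ℂ) (hF : IsQP Γ ξ m F) :
    ∃ Φ : ℂ → PowerSeries ℂ,
      IsJF Γ (ξ - 2 * (m : ℤ) - 2 * (δ : ℤ)) δ Φ ∧ ∀ z ∈ UHP, PiDM δ m Φ z = F z :=
  stmt15_general Γ m ξ hξ δ F hF
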